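/- Let A₁ < 0 < A₂, m ≥ 1 an integer, and F : [A₁,A₂] → ℝ a C^m function with sup_{s∈[A₁,A₂], 0≤j≤m} |F^{(j)}(s)| ≤ B. Let ψ ∈ C^m(ℝⁿ) ∩ H^m(ℝⁿ) with A₁ ≤ ψ(x) ≤ A₂ for all x and with all derivatives of ψ up to order ⌈m/2⌉ bounded by M in L^∞. Then F(ψ) - F(0) ∈ H^m(ℝⁿ) and ‖F(ψ) - F(0)‖_{H^m(ℝⁿ)} ≤ Λ(B, M) ‖ψ‖_{H^m(ℝⁿ)} for some continuous function Λ independent of ψ. -/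

import Mathlib

open MeasureTheory Real Set

noncomputable section

/-- The square of the `H^m(ℝⁿ)` norm (integer `m`), built from iterated derivatives. -/
def sobolevSq (n m : ℕ) (ψ : EuclideanSpace ℝ (Fin n) → ℝ) : ℝ :=
  ∑ i ∈ Finset.range (m + 1), ∫ x, ‖iteratedFDeriv ℝ i ψ x‖ ^ 2

/-- Membership in `H^m(ℝⁿ)` (integer `m`). -/
def MemHm (n m : ℕ) (ψ : EuclideanSpace ℝ (Fin n) → ℝ) : Prop :=
  ∀ i ≤ m, Integrable fun x => ‖iteratedFDeriv ℝ i ψ x‖ ^ 2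

/-- The `H^m(ℝⁿ)` norm (integer `m`). -/
def hmNorm (n m : ℕ) (ψ : EuclideanSpace ℝ (Fin n) → ℝ) : ℝ :=
  sobolevSq n m ψ ^ (1 / 2 : ℝ)

/-! By the chain rule `D (G ∘ ψ) = G'(ψ) • D ψ` and the Leibniz rule, `D^{k+1} (G ∘ ψ)` is a
combination of products `D^l (G' ∘ ψ) · D^{k-l+1} ψ`. For any `c ≥ max 2 (m M)`, induction on
the order (applied to `G'`) bounds each product by `B c^{k²+1} ∑_{1 ≤ j ≤ k+1} |D^j ψ|`, because
in a product `|D^j ψ| · |D^{j'} ψ|` with `j + j' ≤ m` the factor of lower order has order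
`≤ (m + 1) / 2`, hence is at most `M`. So every derivative of `F(ψ) - F(0)` of order `1, …, m`
is pointwise at most a constant times `∑_{j ≤ m} |D^j ψ|`, the order-zero term is at most
`B |ψ|` by the mean value theorem, and squaring and integrating gives the `H^m` bound. -/

section Pointwise

variable {E : Type*} [NormedAddCommGroup E] [NormedSpace ℝ E]

def iteratedFDerivNormSum (ψ : E → ℝ) (i : ℕ) (x : E) : ℝ :=
  ∑ j ∈ Finset.Icc 1 i, ‖iteratedFDeriv ℝ j ψ x‖

lemma iteratedFDerivNormSum_nonneg (ψ : E → ℝ) (i : ℕ) (x : E) :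
    0 ≤ iteratedFDerivNormSum ψ i x :=
  Finset.sum_nonneg fun _ _ => norm_nonneg _

lemma norm_iteratedFDeriv_le_iteratedFDerivNormSum (ψ : E → ℝ) {i j : ℕ} (hj : 1 ≤ j)
    (hji : j ≤ i) (x : E) : ‖iteratedFDeriv ℝ j ψ x‖ ≤ iteratedFDerivNormSum ψ i x :=
  Finset.single_le_sum (f := fun j => ‖iteratedFDeriv ℝ j ψ x‖) (fun _ _ => norm_nonneg _)
    (Finset.mem_Icc.mpr ⟨hj, hji⟩)

lemma iteratedFDerivNormSum_le_sum_range (ψ : E → ℝ) {i m : ℕ} (him : i ≤ m) (x : E) :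
    iteratedFDerivNormSum ψ i x ≤ ∑ j ∈ Finset.range (m + 1), ‖iteratedFDeriv ℝ j ψ x‖ :=
  Finset.sum_le_sum_of_subset_of_nonneg
    (fun j hj => Finset.mem_range.mpr (by have := Finset.mem_Icc.mp hj; omega))
    (fun _ _ _ => norm_nonneg _)

/-- Of two derivatives whose orders add up to at most `m`, one has order at most `(m + 1) / 2`
and is bounded by `M`. -/
lemma norm_mul_norm_iteratedFDeriv_le {ψ : E → ℝ} {m : ℕ} {M : ℝ}
    (hMb : ∀ i ≤ (m + 1) / 2, ∀ x, ‖iteratedFDeriv ℝ i ψ x‖ ≤ M) {i j l : ℕ} (hj : 1 ≤ j)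
    (hl : 1 ≤ l) (hjl : j + l ≤ i) (him : i ≤ m) (x : E) :
    ‖iteratedFDeriv ℝ j ψ x‖ * ‖iteratedFDeriv ℝ l ψ x‖ ≤ M * iteratedFDerivNormSum ψ i x := by
  have hM : 0 ≤ M := (norm_nonneg _).trans (hMb 0 (Nat.zero_le _) x)
  rcases le_total j l with h | h
  · calc ‖iteratedFDeriv ℝ j ψ x‖ * ‖iteratedFDeriv ℝ l ψ x‖
        ≤ M * ‖iteratedFDeriv ℝ l ψ x‖ :=
          mul_le_mul_of_nonneg_right (hMb j (by omega) x) (norm_nonneg _)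
      _ ≤ M * iteratedFDerivNormSum ψ i x :=
          mul_le_mul_of_nonneg_left
            (norm_iteratedFDeriv_le_iteratedFDerivNormSum ψ hl (by omega) x) hM
  · calc ‖iteratedFDeriv ℝ j ψ x‖ * ‖iteratedFDeriv ℝ l ψ x‖
        ≤ ‖iteratedFDeriv ℝ j ψ x‖ * M :=
          mul_le_mul_of_nonneg_left (hMb l (by omega) x) (norm_nonneg _)
      _ ≤ M * iteratedFDerivNormSum ψ i x := by
          rw [mul_comm]
          exact mul_le_mul_of_nonneg_left
            (norm_iteratedFDeriv_le_iteratedFDerivNormSum ψ hj (by omega) x) hM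

lemma iteratedFDerivNormSum_mul_norm_le {ψ : E → ℝ} {m : ℕ} {M : ℝ}
    (hMb : ∀ i ≤ (m + 1) / 2, ∀ x, ‖iteratedFDeriv ℝ i ψ x‖ ≤ M) {i l l' : ℕ}
    (hl' : 1 ≤ l') (hll' : l + l' ≤ i) (him : i ≤ m) (x : E) :
    iteratedFDerivNormSum ψ l x * ‖iteratedFDeriv ℝ l' ψ x‖ ≤
      l * M * iteratedFDerivNormSum ψ i x := by
  calc iteratedFDerivNormSum ψ l x * ‖iteratedFDeriv ℝ l' ψ x‖
      = ∑ j ∈ Finset.Icc 1 l, ‖iteratedFDeriv ℝ j ψ x‖ * ‖iteratedFDeriv ℝ l' ψ x‖ :=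
        Finset.sum_mul _ _ _
    _ ≤ ∑ _j ∈ Finset.Icc 1 l, M * iteratedFDerivNormSum ψ i x :=
        Finset.sum_le_sum fun j hj => by
          have := Finset.mem_Icc.mp hj
          exact norm_mul_norm_iteratedFDeriv_le hMb this.1 hl' (by omega) him x
    _ = l * M * iteratedFDerivNormSum ψ i x := by
        rw [Finset.sum_const, Nat.card_Icc, nsmul_eq_mul, Nat.add_sub_cancel, mul_assoc]

lemma fderiv_comp_eq_derivWithin_smul {s : Set ℝ} {G : ℝ → ℝ} (hG : DifferentiableOn ℝ G s)
    {ψ : E → ℝ} (hψ : Differentiable ℝ ψ) (hmem : ∀ x, ψ x ∈ s) (x : E) :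
    fderiv ℝ (G ∘ ψ) x = derivWithin G s (ψ x) • fderiv ℝ ψ x :=
  ((hG _ (hmem x)).hasDerivWithinAt.comp_hasFDerivAt x (hψ x).hasFDerivAt
    (Filter.Eventually.of_forall hmem)).fderiv

lemma norm_iteratedFDeriv_succ_comp_le {s : Set ℝ} (hs : UniqueDiffOn ℝ s) {G : ℝ → ℝ}
    {ψ : E → ℝ} {k : ℕ} (hG : ContDiffOn ℝ (k + 1) G s) (hψ : ContDiff ℝ (k + 1) ψ)
    (hmem : ∀ x, ψ x ∈ s) (x : E) :
    ‖iteratedFDeriv ℝ (k + 1) (G ∘ ψ) x‖ ≤ ∑ l ∈ Finset.range (k + 1), (k.choose l : ℝ) *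
      ‖iteratedFDeriv ℝ l (derivWithin G s ∘ ψ) x‖ * ‖iteratedFDeriv ℝ (k - l + 1) ψ x‖ := by
  have hchain : fderiv ℝ (G ∘ ψ) = fun y => derivWithin G s (ψ y) • fderiv ℝ ψ y :=
    funext (fderiv_comp_eq_derivWithin_smul (hG.differentiableOn (by simp))
      (hψ.differentiable (by simp)) hmem)
  rw [← norm_iteratedFDeriv_fderiv, hchain]
  refine (norm_iteratedFDeriv_smul_le ((hG.derivWithin hs le_rfl).comp_contDiff
    (hψ.of_le (by simp)) hmem) (hψ.fderiv_right le_rfl) x le_rfl).trans_eq ?_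
  simp only [norm_iteratedFDeriv_fderiv]

/-- The induction step of the pointwise estimate, with `H = G' ∘ ψ` satisfying the induction
hypothesis in orders `1, …, k`. -/
lemma norm_iteratedFDeriv_mul_norm_le_of_moser_bound {ψ : E → ℝ} {m : ℕ} {M B c : ℝ}
    (hMb : ∀ i ≤ (m + 1) / 2, ∀ x, ‖iteratedFDeriv ℝ i ψ x‖ ≤ M) (hB : 0 ≤ B) (hc : 1 ≤ c)
    (hcM : m * M ≤ c) {H : E → ℝ} {k : ℕ} (hk : k + 1 ≤ m) {x : E} (hH0 : ‖H x‖ ≤ B)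
    (hH : ∀ l, 1 ≤ l → l ≤ k →
      ‖iteratedFDeriv ℝ l H x‖ ≤ B * c ^ (l * l) * iteratedFDerivNormSum ψ l x)
    {l : ℕ} (hl : l ≤ k) :
    ‖iteratedFDeriv ℝ l H x‖ * ‖iteratedFDeriv ℝ (k - l + 1) ψ x‖ ≤
      B * c ^ (k * k + 1) * iteratedFDerivNormSum ψ (k + 1) x := by
  have hT := iteratedFDerivNormSum_nonneg ψ (k + 1) x
  rcases Nat.eq_zero_or_pos l with rfl | hl1
  · calc ‖iteratedFDeriv ℝ 0 H x‖ * ‖iteratedFDeriv ℝ (k - 0 + 1) ψ x‖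
        ≤ B * iteratedFDerivNormSum ψ (k + 1) x := by
          rw [norm_iteratedFDeriv_zero]
          exact mul_le_mul hH0 (norm_iteratedFDeriv_le_iteratedFDerivNormSum ψ (by omega)
            (by omega) x) (norm_nonneg _) hB
      _ ≤ B * c ^ (k * k + 1) * iteratedFDerivNormSum ψ (k + 1) x := by
          rw [mul_right_comm]
          exact le_mul_of_one_le_right (mul_nonneg hB hT) (one_le_pow₀ hc)
  · have hM : 0 ≤ M := (norm_nonneg _).trans (hMb 0 (Nat.zero_le _) x)
    have hlM : l * M ≤ c := le_trans (by gcongr; omega) hcM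
    calc ‖iteratedFDeriv ℝ l H x‖ * ‖iteratedFDeriv ℝ (k - l + 1) ψ x‖
        ≤ B * c ^ (l * l) *
            (iteratedFDerivNormSum ψ l x * ‖iteratedFDeriv ℝ (k - l + 1) ψ x‖) := by
          rw [← mul_assoc]
          exact mul_le_mul_of_nonneg_right (hH l hl1 hl) (norm_nonneg _)
      _ ≤ B * c ^ (l * l) * (l * M * iteratedFDerivNormSum ψ (k + 1) x) := by
          refine mul_le_mul_of_nonneg_left ?_ (by positivity)
          exact iteratedFDerivNormSum_mul_norm_le (i := k + 1) (l := l) (l' := k - l + 1) hMb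
            (Nat.succ_pos _) (by omega) hk x
      _ ≤ B * c ^ (k * k) * (c * iteratedFDerivNormSum ψ (k + 1) x) := by
          gcongr
      _ = B * c ^ (k * k + 1) * iteratedFDerivNormSum ψ (k + 1) x := by ring

lemma two_pow_mul_pow_le_pow_sq {c : ℝ} (hc : 2 ≤ c) (k : ℕ) :
    2 ^ k * c ^ (k * k + 1) ≤ c ^ ((k + 1) * (k + 1)) :=
  calc 2 ^ k * c ^ (k * k + 1) ≤ c ^ k * c ^ (k * k + 1) := by gcongr
    _ = c ^ (k * k + k + 1) := by ring
    _ ≤ c ^ ((k + 1) * (k + 1)) := pow_le_pow_right₀ (by linarith) (by nlinarith)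

theorem norm_iteratedFDeriv_comp_le_iteratedFDerivNormSum {s : Set ℝ} (hs : UniqueDiffOn ℝ s)
    {ψ : E → ℝ} {m : ℕ} {M B c : ℝ} (hψ : ContDiff ℝ m ψ) (hmem : ∀ x, ψ x ∈ s)
    (hMb : ∀ i ≤ (m + 1) / 2, ∀ x, ‖iteratedFDeriv ℝ i ψ x‖ ≤ M) (hc : 2 ≤ c)
    (hcM : m * M ≤ c) {i : ℕ} (hi : 1 ≤ i) (him : i ≤ m) {G : ℝ → ℝ} (hG : ContDiffOn ℝ i G s)
    (hGb : ∀ t ∈ s, ∀ j, 1 ≤ j → j ≤ i → |iteratedDerivWithin j G s t| ≤ B) (x : E) :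
    ‖iteratedFDeriv ℝ i (G ∘ ψ) x‖ ≤ B * c ^ (i * i) * iteratedFDerivNormSum ψ i x := by
  induction i using Nat.strong_induction_on generalizing G with
  | _ i IH =>
  obtain ⟨k, rfl⟩ := Nat.exists_eq_add_of_le' hi
  have hB : 0 ≤ B := (abs_nonneg _).trans (hGb _ (hmem x) 1 le_rfl hi)
  have hG' : ContDiffOn ℝ k (derivWithin G s) s := hG.derivWithin hs le_rfl
  have hG'b : ∀ t ∈ s, ∀ j, 1 ≤ j → j ≤ k →
      |iteratedDerivWithin j (derivWithin G s) s t| ≤ B := fun t ht j hj hjk => by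
    rw [← iteratedDerivWithin_succ']
    exact hGb t ht (j + 1) (by omega) (by omega)
  have hG'ψ : ‖(derivWithin G s ∘ ψ) x‖ ≤ B := by
    rw [← iteratedDerivWithin_one]
    exact hGb _ (hmem x) 1 le_rfl hi
  have hterm : ∀ l ∈ Finset.range (k + 1), (k.choose l : ℝ) *
      ‖iteratedFDeriv ℝ l (derivWithin G s ∘ ψ) x‖ * ‖iteratedFDeriv ℝ (k - l + 1) ψ x‖ ≤
      k.choose l * (B * c ^ (k * k + 1) * iteratedFDerivNormSum ψ (k + 1) x) := by
    intro l hl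
    rw [mul_assoc]
    refine mul_le_mul_of_nonneg_left ?_ (Nat.cast_nonneg _)
    exact norm_iteratedFDeriv_mul_norm_le_of_moser_bound hMb hB (by linarith) hcM him hG'ψ
      (fun l hl1 hlk => IH l (by omega) hl1 (by omega) (hG'.of_le (by exact_mod_cast hlk))
        (fun t ht j hj hjl => hG'b t ht j hj (hjl.trans hlk)))
      (Finset.mem_range_succ_iff.mp hl)
  have hBT := mul_nonneg hB (iteratedFDerivNormSum_nonneg ψ (k + 1) x)
  calc ‖iteratedFDeriv ℝ (k + 1) (G ∘ ψ) x‖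
      ≤ ∑ l ∈ Finset.range (k + 1), (k.choose l : ℝ) *
          ‖iteratedFDeriv ℝ l (derivWithin G s ∘ ψ) x‖ * ‖iteratedFDeriv ℝ (k - l + 1) ψ x‖ :=
        norm_iteratedFDeriv_succ_comp_le hs hG (hψ.of_le (by exact_mod_cast him)) hmem x
    _ ≤ ∑ l ∈ Finset.range (k + 1),
          (k.choose l : ℝ) * (B * c ^ (k * k + 1) * iteratedFDerivNormSum ψ (k + 1) x) :=
        Finset.sum_le_sum hterm
    _ = 2 ^ k * c ^ (k * k + 1) * (B * iteratedFDerivNormSum ψ (k + 1) x) := by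
        rw [← Finset.sum_mul, ← Nat.cast_sum, Nat.sum_range_choose]
        push_cast
        ring
    _ ≤ c ^ ((k + 1) * (k + 1)) * (B * iteratedFDerivNormSum ψ (k + 1) x) :=
        mul_le_mul_of_nonneg_right (two_pow_mul_pow_le_pow_sq hc k) hBT
    _ = B * c ^ ((k + 1) * (k + 1)) * iteratedFDerivNormSum ψ (k + 1) x := by ring

lemma iteratedFDeriv_succ_sub_const {F : Type*} [NormedAddCommGroup F] [NormedSpace ℝ F]
    (f : E → F) (c : F) (k : ℕ) :
    iteratedFDeriv ℝ (k + 1) (fun x => f x - c) = iteratedFDeriv ℝ (k + 1) f := by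
  funext x
  simp only [iteratedFDeriv_succ_eq_comp_right, fderiv_sub_const]

theorem norm_iteratedFDeriv_comp_sub_le {s : Set ℝ} (hs : UniqueDiffOn ℝ s) (hconv : Convex ℝ s)
    (h0 : (0 : ℝ) ∈ s) {ψ : E → ℝ} {m : ℕ} {M B c : ℝ} (hm : 1 ≤ m) (hψ : ContDiff ℝ m ψ)
    (hmem : ∀ x, ψ x ∈ s) (hMb : ∀ i ≤ (m + 1) / 2, ∀ x, ‖iteratedFDeriv ℝ i ψ x‖ ≤ M)
    (hc : 2 ≤ c) (hcM : m * M ≤ c) {G : ℝ → ℝ} (hG : ContDiffOn ℝ m G s)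
    (hGb : ∀ t ∈ s, ∀ j, 1 ≤ j → j ≤ m → |iteratedDerivWithin j G s t| ≤ B) {i : ℕ}
    (him : i ≤ m) (x : E) :
    ‖iteratedFDeriv ℝ i (fun x => G (ψ x) - G 0) x‖ ≤
      B * c ^ (m * m) * ∑ j ∈ Finset.range (m + 1), ‖iteratedFDeriv ℝ j ψ x‖ := by
  have hB : 0 ≤ B := (abs_nonneg _).trans (hGb _ (hmem x) 1 le_rfl hm)
  have hc1 : 1 ≤ c := by linarith
  rcases i with _ | k
  · have hmvt : ‖G (ψ x) - G 0‖ ≤ B * ‖ψ x - 0‖ :=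
      hconv.norm_image_sub_le_of_norm_derivWithin_le (hG.differentiableOn (by simp; omega))
        (fun t ht => by
          rw [Real.norm_eq_abs, ← iteratedDerivWithin_one]
          exact hGb t ht 1 le_rfl hm)
        h0 (hmem x)
    have hψx : ‖ψ x‖ ≤ ∑ j ∈ Finset.range (m + 1), ‖iteratedFDeriv ℝ j ψ x‖ :=
      (norm_iteratedFDeriv_zero (𝕜 := ℝ)).symm.le.trans <|
        Finset.single_le_sum (f := fun j => ‖iteratedFDeriv ℝ j ψ x‖)
          (fun _ _ => norm_nonneg _) (Finset.mem_range.mpr m.succ_pos)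
    rw [sub_zero] at hmvt
    rw [norm_iteratedFDeriv_zero]
    calc ‖G (ψ x) - G 0‖ ≤ B * ‖ψ x‖ := hmvt
      _ ≤ B * 1 * ∑ j ∈ Finset.range (m + 1), ‖iteratedFDeriv ℝ j ψ x‖ := by
          rw [mul_one]; gcongr
      _ ≤ B * c ^ (m * m) * ∑ j ∈ Finset.range (m + 1), ‖iteratedFDeriv ℝ j ψ x‖ := by
          gcongr
          exact one_le_pow₀ hc1
  · rw [iteratedFDeriv_succ_sub_const]
    calc ‖iteratedFDeriv ℝ (k + 1) (G ∘ ψ) x‖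
        ≤ B * c ^ ((k + 1) * (k + 1)) * iteratedFDerivNormSum ψ (k + 1) x :=
          norm_iteratedFDeriv_comp_le_iteratedFDerivNormSum hs hψ hmem hMb hc hcM
            (Nat.succ_pos k) him (hG.of_le (by exact_mod_cast him))
            (fun t ht j hj hjk => hGb t ht j hj (hjk.trans him)) x
      _ ≤ B * c ^ (m * m) * ∑ j ∈ Finset.range (m + 1), ‖iteratedFDeriv ℝ j ψ x‖ := by
          gcongr
          · exact iteratedFDerivNormSum_nonneg ψ _ x
          · exact iteratedFDerivNormSum_le_sum_range ψ him x

end Pointwise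

section Sobolev

variable {n m : ℕ}

lemma sobolevSq_nonneg (ψ : EuclideanSpace ℝ (Fin n) → ℝ) : 0 ≤ sobolevSq n m ψ :=
  Finset.sum_nonneg fun _ _ => integral_nonneg fun _ => sq_nonneg _

lemma hmNorm_eq_sqrt (ψ : EuclideanSpace ℝ (Fin n) → ℝ) : hmNorm n m ψ = √(sobolevSq n m ψ) :=
  (Real.sqrt_eq_rpow _).symm

lemma hmNorm_le_of_sobolevSq_le {g ψ : EuclideanSpace ℝ (Fin n) → ℝ} {K : ℝ} (hK : 0 ≤ K)
    (h : sobolevSq n m g ≤ K ^ 2 * sobolevSq n m ψ) : hmNorm n m g ≤ K * hmNorm n m ψ := by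
  rw [hmNorm_eq_sqrt, hmNorm_eq_sqrt, ← Real.sqrt_sq hK, ← Real.sqrt_mul (sq_nonneg K)]
  exact Real.sqrt_le_sqrt h

lemma integral_sum_sq_norm_iteratedFDeriv {ψ : EuclideanSpace ℝ (Fin n) → ℝ}
    (hψ : MemHm n m ψ) :
    ∫ x, ∑ j ∈ Finset.range (m + 1), ‖iteratedFDeriv ℝ j ψ x‖ ^ 2 = sobolevSq n m ψ :=
  integral_finsetSum _ fun j hj => hψ j (Nat.lt_succ_iff.mp (Finset.mem_range.mp hj))

lemma sq_le_card_mul_sq_mul_sum_sq {ι : Type*} {s : Finset ι} {f : ι → ℝ} {y C : ℝ}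
    (hy : 0 ≤ y) (h : y ≤ C * ∑ i ∈ s, f i) : y ^ 2 ≤ s.card * C ^ 2 * ∑ i ∈ s, f i ^ 2 :=
  calc y ^ 2 ≤ (C * ∑ i ∈ s, f i) ^ 2 := pow_le_pow_left₀ hy h 2
    _ = C ^ 2 * (∑ i ∈ s, f i) ^ 2 := mul_pow _ _ _
    _ ≤ C ^ 2 * (s.card * ∑ i ∈ s, f i ^ 2) := by gcongr; exact sq_sum_le_card_mul_sum_sq
    _ = s.card * C ^ 2 * ∑ i ∈ s, f i ^ 2 := by ring

theorem memHm_and_hmNorm_le_of_norm_iteratedFDeriv_le {g ψ : EuclideanSpace ℝ (Fin n) → ℝ}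
    {C : ℝ} (hC : 0 ≤ C) (hg : ContDiff ℝ m g) (hψ : MemHm n m ψ)
    (hbound : ∀ i ≤ m, ∀ x,
      ‖iteratedFDeriv ℝ i g x‖ ≤ C * ∑ j ∈ Finset.range (m + 1), ‖iteratedFDeriv ℝ j ψ x‖) :
    MemHm n m g ∧ hmNorm n m g ≤ (m + 1) * C * hmNorm n m ψ := by
  set Q := fun x => ∑ j ∈ Finset.range (m + 1), ‖iteratedFDeriv ℝ j ψ x‖ ^ 2
  have hQ : Integrable Q :=
    integrable_finsetSum _ fun j hj => hψ j (Nat.lt_succ_iff.mp (Finset.mem_range.mp hj))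
  have hsq : ∀ i ≤ m, ∀ x, ‖iteratedFDeriv ℝ i g x‖ ^ 2 ≤ (m + 1) * C ^ 2 * Q x :=
    fun i hi x => by simpa using sq_le_card_mul_sq_mul_sum_sq (norm_nonneg _) (hbound i hi x)
  have hg : MemHm n m g := fun i hi =>
    (hQ.const_mul _).mono'
      ((hg.continuous_iteratedFDeriv (by exact_mod_cast hi)).norm.pow 2).aestronglyMeasurable
      (Filter.Eventually.of_forall fun x => by
        rw [Real.norm_eq_abs, abs_of_nonneg (sq_nonneg _)]
        exact hsq i hi x)
  refine ⟨hg, hmNorm_le_of_sobolevSq_le (by positivity) ?_⟩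
  calc sobolevSq n m g ≤ ∑ _i ∈ Finset.range (m + 1), (m + 1) * C ^ 2 * ∫ x, Q x :=
        Finset.sum_le_sum fun i hi => by
          have him := Nat.lt_succ_iff.mp (Finset.mem_range.mp hi)
          exact (integral_mono (hg i him) (hQ.const_mul _) (hsq i him)).trans_eq
            (integral_const_mul _ _)
    _ = ((m + 1) * C) ^ 2 * sobolevSq n m ψ := by
        rw [Finset.sum_const, Finset.card_range, nsmul_eq_mul,
          integral_sum_sq_norm_iteratedFDeriv hψ]
        push_cast
        ring

end Sobolev

/-- (Moser-type composition estimate.)  Let `A₁ < 0 < A₂`, `m ≥ 1`,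
and let `F : [A₁,A₂] → ℝ` be `C^m` with all derivatives up to order `m` bounded by `B`
on `[A₁,A₂]`.  Let `ψ ∈ C^m(ℝⁿ) ∩ H^m(ℝⁿ)` take values in `[A₁,A₂]`, with all
derivatives up to order `⌈m/2⌉` bounded by `M` in `L^∞`.  Then `F(ψ) - F(0) ∈ H^m(ℝⁿ)`
and `‖F(ψ) - F(0)‖_{H^m} ≤ Λ(B, M) ‖ψ‖_{H^m}` for a continuous function `Λ`
independent of `ψ` (and of `F`, which enters only through `B`). -/
theorem moser_composition_estimate (n m : ℕ) (hm : 1 ≤ m) (A₁ A₂ : ℝ)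
    (hA₁ : A₁ < 0) (hA₂ : 0 < A₂) :
    ∃ Λ : ℝ → ℝ → ℝ, (Continuous fun q : ℝ × ℝ => Λ q.1 q.2) ∧
      ∀ (F : ℝ → ℝ) (B : ℝ) (ψ : EuclideanSpace ℝ (Fin n) → ℝ) (M : ℝ),
        ContDiffOn ℝ (m : ℕ∞) F (Icc A₁ A₂) →
        (∀ s ∈ Icc A₁ A₂, ∀ j ≤ m, |iteratedDerivWithin j F (Icc A₁ A₂) s| ≤ B) →
        ContDiff ℝ (m : ℕ∞) ψ →
        MemHm n m ψ →
        (∀ x, ψ x ∈ Icc A₁ A₂) →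
        (∀ i ≤ (m + 1) / 2, ∀ x, ‖iteratedFDeriv ℝ i ψ x‖ ≤ M) →
        MemHm n m (fun x => F (ψ x) - F 0) ∧
          hmNorm n m (fun x => F (ψ x) - F 0) ≤ Λ B M * hmNorm n m ψ := by
  refine ⟨fun B M => (m + 1) * (|B| * (2 + m * |M|) ^ (m * m)), by fun_prop, ?_⟩
  intro F B ψ M hF hFb hψ hH hmem hMb
  have h0 : (0 : ℝ) ∈ Icc A₁ A₂ := ⟨hA₁.le, hA₂.le⟩
  have hB : 0 ≤ B := (abs_nonneg _).trans (hFb 0 h0 0 (Nat.zero_le _))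
  have hM : 0 ≤ M := (norm_nonneg _).trans (hMb 0 (Nat.zero_le _) 0)
  have hmM : 0 ≤ (m : ℝ) * M := by positivity
  simp only [abs_of_nonneg hB, abs_of_nonneg hM]
  exact memHm_and_hmNorm_le_of_norm_iteratedFDeriv_le (by positivity)
    ((hF.comp_contDiff hψ hmem).sub contDiff_const) hH fun i hi x =>
      norm_iteratedFDeriv_comp_sub_le (uniqueDiffOn_Icc (hA₁.trans hA₂)) (convex_Icc A₁ A₂) h0 hm
        hψ hmem hMb (by linarith) (by linarith) hF (fun t ht j _ hj => hFb t ht j hj) hi x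

end
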